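/- Let S be a finite set and μ a capacity on 2^S whose Möbius inverse m is nonnegative (a belief function). Then the Choquet integral of any a : S → ℝ with respect to μ equals Σ_{E ⊆ S, E ≠ ∅} m(E) · min_{t ∈ E} a(t). -/

import Mathlib

open scoped Classical

/-- Minimum of `v` over a finite set (0 if empty). -/
noncomputable def minOnFin {α : Type*} (E : Finset α) (v : α → ℝ) : ℝ :=
  if h : E.Nonempty then E.inf' h v else 0

/-- Auxiliary sum for the finite Choquet integral: given the (ascending) list of values of
`a` and the previous value, sum `(v - prev) * μ({a ≥ v})`. -/
noncomputable def choquetAux {S : Type*} [Fintype S] (μ : Finset S → ℝ) (a : S → ℝ) :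
    ℝ → List ℝ → ℝ
  | _, [] => 0
  | prev, v :: rest =>
      (v - prev) * μ (Finset.univ.filter (fun s => v ≤ a s)) + choquetAux μ a v rest

/-- The Choquet integral of `a` with respect to `μ` on a finite state space, via the
(ascending) sorted distinct values of `a`, starting from 0. -/
noncomputable def choquet {S : Type*} [Fintype S] (μ : Finset S → ℝ) (a : S → ℝ) : ℝ :=
  choquetAux μ a 0 ((Finset.univ.image a).sort (· ≤ ·))

/-!
The Choquet integral is linear in `μ`, and Möbius inversion writes a grounded `μ` as
`μ B = ∑_{∅ ≠ E ⊆ B} m E`, i.e. as the combination `∑_{E ≠ ∅} m E • u_E` of the unanimity games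
`u_E B = [E ⊆ B]`. For `u_E` the upper level set `{a ≥ v}` contains `E` exactly when
`v ≤ min_E a`, so the Choquet integral of `a` with respect to `u_E` is `min_E a`.
-/

open Finset

section Moebius

variable {α R : Type*} [DecidableEq α] [Ring R]

def moebius (μ : Finset α → R) (E : Finset α) : R :=
  ∑ A ∈ E.powerset, (-1 : R) ^ (E \ A).card * μ A

lemma sum_Icc_neg_one_pow_card_sdiff {A B : Finset α} (hBA : B ⊆ A) :
    ∑ E ∈ Icc B A, (-1 : R) ^ (E \ B).card = if B = A then 1 else 0 := by
  have hdisj : ∀ C ∈ (A \ B).powerset, Disjoint B C := fun C hC =>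
    disjoint_of_subset_right (mem_powerset.1 hC) disjoint_sdiff
  have hinj : Set.InjOn (B ∪ ·) (A \ B).powerset := fun C hC D hD h => by
    rw [← union_sdiff_cancel_left (hdisj C hC), ← union_sdiff_cancel_left (hdisj D hD)]
    exact congrArg (· \ B) h
  have hsum := congrArg (Int.cast : ℤ → R) (sum_powerset_neg_one_pow_card (x := A \ B))
  push_cast at hsum
  rw [Icc_eq_image_powerset hBA, sum_image hinj,
    sum_congr rfl fun C hC => by rw [union_sdiff_cancel_left (hdisj C hC)], hsum]
  exact if_congr (sdiff_eq_empty_iff_subset.trans ⟨hBA.antisymm, fun h => h ▸ subset_rfl⟩) rfl rfl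

lemma sum_powerset_moebius (μ : Finset α → R) (A : Finset α) :
    ∑ E ∈ A.powerset, moebius μ E = μ A := by
  unfold moebius
  rw [sum_comm' (t' := A.powerset) (s' := fun B => Icc B A) (by
    intro E B; simp only [mem_powerset, mem_Icc]; tauto)]
  simp_rw [← sum_mul]
  rw [sum_congr rfl fun B hB => by rw [sum_Icc_neg_one_pow_card_sdiff (mem_powerset.1 hB)]]
  simp [ite_mul]

lemma moebius_empty (μ : Finset α → R) : moebius μ ∅ = μ ∅ := by
  simp [moebius]

end Moebius

section Choquet

variable {S : Type*} [Fintype S]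

lemma choquetAux_sum_mul {ι : Type*} (T : Finset ι) (c : ι → ℝ) (ν : ι → Finset S → ℝ)
    (a : S → ℝ) : ∀ (prev : ℝ) (l : List ℝ),
      choquetAux (fun B => ∑ i ∈ T, c i * ν i B) a prev l =
        ∑ i ∈ T, c i * choquetAux (ν i) a prev l
  | _, [] => by simp [choquetAux]
  | prev, v :: rest => by
      simp only [choquetAux, choquetAux_sum_mul T c ν a v rest, mul_sum, ← sum_add_distrib]
      exact sum_congr rfl fun i _ => by ring

lemma choquet_sum_mul {ι : Type*} (T : Finset ι) (c : ι → ℝ) (ν : ι → Finset S → ℝ)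
    (a : S → ℝ) :
    choquet (fun B => ∑ i ∈ T, c i * ν i B) a = ∑ i ∈ T, c i * choquet (ν i) a :=
  choquetAux_sum_mul T c ν a 0 _

section Threshold

variable {ν : Finset S → ℝ} {a : S → ℝ} {c : ℝ}
  (hν : ∀ v, ν (univ.filter fun s => v ≤ a s) = if v ≤ c then 1 else 0)
include hν

lemma choquetAux_eq_zero_of_forall_threshold_lt :
    ∀ (prev : ℝ) (l : List ℝ), (∀ v ∈ l, c < v) → choquetAux ν a prev l = 0
  | _, [], _ => rfl
  | prev, v :: rest, hl => by
      rw [choquetAux, hν, if_neg (not_le.2 (hl v List.mem_cons_self)),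
        choquetAux_eq_zero_of_forall_threshold_lt v rest fun w hw =>
          hl w (List.mem_cons_of_mem v hw)]
      ring

lemma choquetAux_eq_threshold_sub :
    ∀ (prev : ℝ) (l : List ℝ), l.Pairwise (· < ·) → c ∈ l → choquetAux ν a prev l = c - prev
  | _, [], _, hc => absurd hc List.not_mem_nil
  | prev, v :: rest, hl, hc => by
      rw [List.pairwise_cons] at hl
      rcases List.mem_cons.1 hc with rfl | hc
      · rw [choquetAux, hν, if_pos le_rfl,
          choquetAux_eq_zero_of_forall_threshold_lt hν c rest hl.1]
        ring
      · rw [choquetAux, hν, if_pos (hl.1 c hc).le, choquetAux_eq_threshold_sub v rest hl.2 hc]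
        ring

lemma choquet_eq_threshold (hc : c ∈ Set.range a) : choquet ν a = c := by
  obtain ⟨s, rfl⟩ := hc
  rw [choquet, choquetAux_eq_threshold_sub hν 0 _ (sortedLT_sort _).pairwise
    (by simp), sub_zero]

end Threshold

variable [DecidableEq S]

def unanimityGame (E : Finset S) (B : Finset S) : ℝ := if E ⊆ B then 1 else 0

lemma choquet_unanimityGame {E : Finset S} (hE : E.Nonempty) (a : S → ℝ) :
    choquet (unanimityGame E) a = E.inf' hE a := by
  refine choquet_eq_threshold (fun v => ?_) ?_
  · simp only [unanimityGame, le_inf'_iff, subset_iff, mem_filter, mem_univ, true_and]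
  · obtain ⟨s, -, hs⟩ := exists_mem_eq_inf' hE a
    exact ⟨s, hs.symm⟩

lemma sum_moebius_mul_unanimityGame {μ : Finset S → ℝ} (hμ : μ ∅ = 0) (B : Finset S) :
    ∑ E ∈ univ.powerset.filter (fun E => E.Nonempty), moebius μ E * unanimityGame E B = μ B := by
  rw [sum_filter_of_ne fun E _ hE => nonempty_iff_ne_empty.2 fun h => hE (by
    rw [h, moebius_empty, hμ, zero_mul])]
  simp_rw [unanimityGame, mul_ite, mul_one, mul_zero]
  rw [← sum_filter, powerset_univ, filter_subset_univ, sum_powerset_moebius]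

end Choquet

theorem stmt_14_general {S : Type*} [Fintype S] [DecidableEq S] (μ : Finset S → ℝ)
    (hground : μ ∅ = 0)
    (m : Finset S → ℝ)
    (hm : ∀ E : Finset S, m E = ∑ A ∈ E.powerset, (-1 : ℝ) ^ (E \ A).card * μ A)
    (a : S → ℝ) :
    choquet μ a
      = ∑ E ∈ (Finset.univ : Finset S).powerset.filter (fun E => E.Nonempty),
          m E * minOnFin E a := by
  obtain rfl : m = moebius μ := funext hm
  have hmin : ∀ E ∈ univ.powerset.filter (fun E => E.Nonempty),
      moebius μ E * minOnFin E a = moebius μ E * choquet (unanimityGame E) a := fun E hE => by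
    rw [choquet_unanimityGame (mem_filter.1 hE).2, minOnFin, dif_pos (mem_filter.1 hE).2]
  rw [sum_congr rfl hmin, ← choquet_sum_mul]
  simp_rw [sum_moebius_mul_unanimityGame hground]

/-- For a belief function (capacity with nonnegative Möbius inverse), the Choquet integral
equals the Möbius-weighted sum of minima over nonempty events. -/
theorem stmt_14 {S : Type*} [Fintype S] [DecidableEq S] (μ : Finset S → ℝ)
    (hground : μ ∅ = 0) (hnorm : μ Finset.univ = 1)
    (hmono : ∀ A B : Finset S, A ⊆ B → μ A ≤ μ B)
    (m : Finset S → ℝ)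
    (hm : ∀ E : Finset S, m E = ∑ A ∈ E.powerset, (-1 : ℝ) ^ (E \ A).card * μ A)
    (hm0 : ∀ E : Finset S, 0 ≤ m E)
    (a : S → ℝ) :
    choquet μ a
      = ∑ E ∈ (Finset.univ : Finset S).powerset.filter (fun E => E.Nonempty),
          m E * minOnFin E a :=
  stmt_14_general μ hground m hm a
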